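/- With T_S as above, v* the dual of v, and F(k-vector) the joint CDF, one has R_S(t) = 1 - Σ_{A⊆[n]} m_{v*}(A) · P(T_i ≤ t for all i ∈ A), using Σ_{A⊆[n]} m_{v*}(A) = 1. -/

import Mathlib

/-!
Let `D(ω) = {i | T_i(ω) ≤ t}` be the set of components dead at time `t`. Since `v` is monotone
and `v ∅ = 0`, the system is alive at `t` exactly when `v (D(ω)ᶜ) = 1`, and
`v (D(ω)ᶜ) = 1 - v* (D(ω)) = 1 - ∑_{A ⊆ D(ω)} m_{v*}(A)` by Möbius inversion on the Boolean
lattice. Integrating this pointwise identity of indicator functions gives the formula, because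
`A ⊆ D(ω)` is the event `∀ i ∈ A, T_i(ω) ≤ t`.
-/

open scoped ENNReal

def mobiusTransform {n : ℕ} (v : Finset (Fin n) → ℤ) (A : Finset (Fin n)) : ℤ :=
  ∑ B ∈ A.powerset, (-1) ^ (A.card - B.card) * v B

open Finset MeasureTheory

section Measurable

variable {α δ ι : Type*} [MeasurableSpace α] [MeasurableSpace δ] {s : Finset ι} {f : ι → δ → α}

theorem Finset.measurable_sup_apply [SemilatticeSup α] [OrderBot α] [MeasurableSup₂ α]
    (hf : ∀ i ∈ s, Measurable (f i)) : Measurable fun x => s.sup fun i => f i x := by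
  simp_rw [← Finset.sup_apply]
  exact Finset.sup_induction measurable_const (fun _ h _ h' => h.sup h') hf

theorem Finset.measurable_inf_apply [SemilatticeInf α] [OrderTop α] [MeasurableInf₂ α]
    (hf : ∀ i ∈ s, Measurable (f i)) : Measurable fun x => s.inf fun i => f i x := by
  simp_rw [← Finset.inf_apply]
  exact Finset.inf_induction measurable_const (fun _ h _ h' => h.inf h') hf

end Measurable

theorem measureReal_eq_one_sub_sum_of_indicator {Ω ι : Type*} [MeasurableSpace Ω] {μ : Measure Ω}
    [IsProbabilityMeasure μ] {S : Set Ω} {E : ι → Set Ω} {s : Finset ι} (a : ι → ℝ)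
    (hS : MeasurableSet S) (hE : ∀ i ∈ s, MeasurableSet (E i))
    (h : ∀ ω, S.indicator 1 ω = 1 - ∑ i ∈ s, a i * (E i).indicator 1 ω) :
    μ.real S = 1 - ∑ i ∈ s, a i * μ.real (E i) := by
  have hint : ∀ i ∈ s, Integrable (fun ω => a i * (E i).indicator 1 ω) μ := fun i hi =>
    ((integrable_const 1).indicator (hE i hi)).const_mul (a i)
  rw [← integral_indicator_one hS, funext h, integral_sub (integrable_const 1)
    (integrable_finsetSum s hint), integral_finsetSum s hint, integral_const, probReal_univ,
    one_smul]
  congr 1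
  exact sum_congr rfl fun i hi => by rw [integral_const_mul, integral_indicator_one (hE i hi)]

theorem sum_powerset_mobiusTransform {n : ℕ} (w : Finset (Fin n) → ℤ) (C : Finset (Fin n)) :
    ∑ A ∈ C.powerset, mobiusTransform w A = w C := by
  have alternating : ∀ B ⊆ C, ∑ A ∈ Icc B C, (-1 : ℤ) ^ (#A - #B) = if B = C then 1 else 0 := by
    intro B hBC
    have disj : ∀ D ∈ (C \ B).powerset, Disjoint B D := fun D hD =>
      disjoint_of_subset_right (mem_powerset.1 hD) disjoint_sdiff
    rw [Icc_eq_image_powerset hBC, sum_image]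
    · rw [sum_congr rfl fun D hD => by
        rw [card_union_of_disjoint (disj D hD), Nat.add_sub_cancel_left]]
      rw [sum_powerset_neg_one_pow_card]
      exact if_congr (sdiff_eq_empty_iff_subset.trans ⟨hBC.antisymm, fun h => h ▸ subset_rfl⟩)
        rfl rfl
    · intro D hD D' hD' h
      rw [← union_sdiff_cancel_left (disj D hD), ← union_sdiff_cancel_left (disj D' hD')]
      exact congrArg (· \ B) h
  calc ∑ A ∈ C.powerset, mobiusTransform w A
      = ∑ B ∈ C.powerset, ∑ A ∈ Icc B C, (-1) ^ (#A - #B) * w B := by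
        unfold mobiusTransform
        exact sum_comm' fun A B => by simp only [mem_powerset, mem_Icc]; tauto
    _ = ∑ B ∈ C.powerset, if B = C then w B else 0 := by
        refine sum_congr rfl fun B hB => ?_
        rw [← sum_mul, alternating B (mem_powerset.1 hB), ite_mul, one_mul, zero_mul]
    _ = w C := by simp

theorem Monotone.map_bot_eq_zero_of_ne {β : Type*} [Preorder β] [OrderBot β] {v : β → ℤ}
    (hmono : Monotone v) (hv : ∀ A, v A = 0 ∨ v A = 1) {A B : β} (hAB : v A ≠ v B) : v ⊥ = 0 := by
  have := hmono (bot_le (a := A))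
  have := hmono (bot_le (a := B))
  rcases hv A with hA | hA <;> rcases hv B with hB | hB <;> rcases hv ⊥ with h | h <;> omega

theorem lt_sup_inf_iff {ι α : Type*} [Fintype ι] [LinearOrder α] [BoundedOrder α]
    {v : Finset ι → ℤ} (hv : ∀ A, v A = 0 ∨ v A = 1) (hmono : Monotone v) (hv0 : v ∅ = 0)
    (x : ι → α) (t : α) :
    t < (univ.filter fun A => v A = 1).sup (fun A => A.inf x) ↔
      v (univ.filter fun i => t < x i) = 1 := by
  rw [Finset.lt_sup_iff]
  constructor
  · rintro ⟨A, hA, hlt⟩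
    have := hmono fun i hi => mem_filter.2 ⟨mem_univ i, hlt.trans_le (inf_le hi)⟩
    rcases hv (univ.filter fun i => t < x i) with h | h
    · rw [(mem_filter.1 hA).2] at this; omega
    · exact h
  · intro h
    obtain ⟨i, hi⟩ : (univ.filter fun i => t < x i).Nonempty :=
      nonempty_iff_ne_empty.2 fun he => by simp [he, hv0] at h
    refine ⟨_, mem_filter.2 ⟨mem_univ _, h⟩, ?_⟩
    rw [Finset.lt_inf_iff (lt_top_of_lt (mem_filter.1 hi).2)]
    exact fun j hj => (mem_filter.1 hj).2

theorem reliability_dual_mobius_general {n : ℕ} {Ω : Type*} [MeasurableSpace Ω]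
    (μ : MeasureTheory.Measure Ω) [MeasureTheory.IsProbabilityMeasure μ]
    (T : Fin n → Ω → ℝ≥0∞) (hT : ∀ i, Measurable (T i))
    (v : Finset (Fin n) → ℤ)
    (hv : ∀ A, v A = 0 ∨ v A = 1)
    (hmono : ∀ A B : Finset (Fin n), A ⊆ B → v A ≤ v B)
    (hnonconst : ∃ A B : Finset (Fin n), v A ≠ v B)
    (t : ℝ≥0∞) :
    (μ {ω | (Finset.univ.filter (fun A : Finset (Fin n) => v A = 1)).sup
        (fun A => A.inf (fun i => T i ω)) > t}).toReal =
      1 - ∑ A : Finset (Fin n), (mobiusTransform (fun B => 1 - v Bᶜ) A : ℝ) *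
        (μ {ω | ∀ i ∈ A, T i ω ≤ t}).toReal := by
  obtain ⟨A₀, B₀, hne⟩ := hnonconst
  have hv0 : v ∅ = 0 := Monotone.map_bot_eq_zero_of_ne hmono hv hne
  refine measureReal_eq_one_sub_sum_of_indicator _ ?_ (fun A _ => ?_) fun ω => ?_
  · exact measurableSet_lt measurable_const
      (measurable_sup_apply fun A _ => measurable_inf_apply fun i _ => hT i)
  · simp only [Set.ofPred_forall]
    exact Finset.measurableSet_biInter A fun i _ => measurableSet_le (hT i) measurable_const
  · set D := univ.filter fun i => T i ω ≤ t
    have alive : univ.filter (fun i => t < T i ω) = Dᶜ := by ext; simp [D]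
    have dead : univ.filter (fun A : Finset (Fin n) => ∀ i ∈ A, T i ω ≤ t) = D.powerset := by
      ext; simp [D, subset_iff]
    have key := sum_powerset_mobiusTransform (fun B => 1 - v Bᶜ) D
    simp only [Set.indicator_apply, Set.mem_ofPred_eq, Pi.one_apply, mul_ite, mul_one, mul_zero]
    rw [if_congr (lt_sup_inf_iff hv hmono hv0 _ t) rfl rfl, alive, ← sum_filter, dead]
    rw [← Int.cast_sum, key, Int.cast_sub, Int.cast_one, sub_sub_cancel]
    rcases hv Dᶜ with h | h <;> simp [h]

/-- Dual Möbius reliability formula: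
`R_S(t) = 1 - Σ_A m_{v*}(A) · P(∀ i ∈ A, T_i ≤ t)`, where
`v*(A) = 1 - v([n]∖A)`. -/
theorem reliability_dual_mobius {n : ℕ} {Ω : Type*} [MeasurableSpace Ω]
    (μ : MeasureTheory.Measure Ω) [MeasureTheory.IsProbabilityMeasure μ]
    (T : Fin n → Ω → ℝ≥0∞) (hT : ∀ i, Measurable (T i))
    (v : Finset (Fin n) → ℤ)
    (hv : ∀ A, v A = 0 ∨ v A = 1)
    (hmono : ∀ A B : Finset (Fin n), A ⊆ B → v A ≤ v B)
    (hnonconst : ∃ A B : Finset (Fin n), v A ≠ v B)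
    (t : ℝ≥0∞) (ht : 0 ≤ t) :
    (μ {ω | (Finset.univ.filter (fun A : Finset (Fin n) => v A = 1)).sup
        (fun A => A.inf (fun i => T i ω)) > t}).toReal =
      1 - ∑ A : Finset (Fin n), (mobiusTransform (fun B => 1 - v Bᶜ) A : ℝ) *
        (μ {ω | ∀ i ∈ A, T i ω ≤ t}).toReal :=
  reliability_dual_mobius_general μ T hT v hv hmono hnonconst t
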